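/- Let t be a non-periodic linearly recurrent sequence with constant L, let u be a factor of t, and let l ∈ ℕ. Then the number of factors of t of length at most l that are concatenations of return words to u is at most (1 + 4L³)^(lL/|u|). -/

import Mathlib

/-- The factor of the sequence `x` starting at position `i` of length `n`. -/
def seqWord {A : Type*} (x : ℕ → A) (i n : ℕ) : List A :=
  (List.range n).map (fun k => x (i + k))

/-- The word `u` occurs in the sequence `x` at position `i`. -/
def occursAt {A : Type*} (x : ℕ → A) (u : List A) (i : ℕ) : Prop :=
  seqWord x i u.length = u

/-- `u` is a factor of the sequence `x`. -/
def IsFactor {A : Type*} (x : ℕ → A) (u : List A) : Prop :=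
  ∃ i, occursAt x u i

/-- `u` is a prefix of the sequence `x`. -/
def IsPrefixSeq {A : Type*} (u : List A) (x : ℕ → A) : Prop :=
  occursAt x u 0

/-- `x` is uniformly recurrent: every factor occurs in every sufficiently long window. -/
def UnifRec {A : Type*} (x : ℕ → A) : Prop :=
  ∀ u : List A, IsFactor x u → ∃ C, ∀ i, ∃ j, i ≤ j ∧ j < i + C ∧ occursAt x u j

/-- `w` is a return word to `u` in `x`: the factor between two consecutive occurrences of `u`. -/
def IsReturnWord {A : Type*} (x : ℕ → A) (u w : List A) : Prop :=
  ∃ i j, i < j ∧ occursAt x u i ∧ occursAt x u j ∧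
    (∀ k, i < k → k < j → ¬ occursAt x u k) ∧ w = seqWord x i (j - i)

/-- Apply a morphism (given on letters) to a word, by concatenation. -/
def morphApply {I A : Type*} (θ : I → List A) (l : List I) : List A :=
  (l.map θ).flatten

/-- Iterate an endomorphism `σ` of the free monoid `n` times on a word. -/
def morphIter {A : Type*} (σ : A → List A) : ℕ → List A → List A
  | 0, l => l
  | n + 1, l => morphApply σ (morphIter σ n l)

/-- `x` is ultimately periodic. -/
def UltPeriodic {A : Type*} (x : ℕ → A) : Prop :=
  ∃ p > 0, ∃ N, ∀ n ≥ N, x (n + p) = x n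

/-- `x` is linearly recurrent with constant `K`: it is uniformly recurrent and two
successive occurrences of any nonempty factor `u` differ by at most `K * |u|`. -/
def LinRec {A : Type*} (K : ℕ) (x : ℕ → A) : Prop :=
  UnifRec x ∧ ∀ u : List A, u ≠ [] → IsFactor x u →
    ∀ i, occursAt x u i → ∃ j, i < j ∧ j ≤ i + K * u.length ∧ occursAt x u j

/-- `σ` is prolongable on the letter `a`. -/
def Prolongable {A : Type*} (σ : A → List A) (a : A) : Prop :=
  (∃ t, σ a = a :: t ∧ t ≠ []) ∧
    Filter.Tendsto (fun n => (morphIter σ n [a]).length) Filter.atTop Filter.atTop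

/-- `σ` is growing: the image of each letter has length tending to infinity. -/
def Growing {A : Type*} (σ : A → List A) : Prop :=
  ∀ a, Filter.Tendsto (fun n => (morphIter σ n [a]).length) Filter.atTop Filter.atTop

/-- `σ` is primitive: some power sends every letter to a word containing every letter. -/
def Primitive {A : Type*} (σ : A → List A) : Prop :=
  ∃ n > 0, ∀ a b : A, b ∈ morphIter σ n [a]

/-- `x` is the fixed point `σ^∞(a)` of `σ`, prolongable on `a`. -/
def IsFixedPointOf {A : Type*} (σ : A → List A) (a : A) (x : ℕ → A) : Prop :=
  x 0 = a ∧ ∀ n, IsPrefixSeq (morphIter σ n [a]) x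

/-- The word `w` belongs to the language of the endomorphism `σ`. -/
def InLang {A : Type*} (σ : A → List A) (w : List A) : Prop :=
  ∃ a n, w <:+: morphIter σ n [a]

/-- The word `u` occurs at position `i` in the word `w`. -/
def listOccursAt {A : Type*} (w u : List A) (i : ℕ) : Prop :=
  i + u.length ≤ w.length ∧ (w.drop i).take u.length = u

/-- `|σ^k|`: the maximal length of the image of a letter under `σ^k`. -/
def maxLen {A : Type*} [Fintype A] [Nonempty A] (σ : A → List A) (k : ℕ) : ℕ :=
  Finset.univ.sup' Finset.univ_nonempty (fun a => (morphIter σ k [a]).length)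

/-- `⟨σ^k⟩`: the minimal length of the image of a letter under `σ^k`. -/
def minLen {A : Type*} [Fintype A] [Nonempty A] (σ : A → List A) (k : ℕ) : ℕ :=
  Finset.univ.inf' Finset.univ_nonempty (fun a => (morphIter σ k [a]).length)

/-- `(R, θ, z)` is the derived-sequence data of `x` on the prefix `u`: `θ 0, …, θ (R-1)`
enumerate the return words to `u` in order of first appearance in `x`, `z` is the derived
sequence, i.e. the coding of the decomposition of `x` into return words to `u`,
so that `Θ_{x,u}(z) = x`. -/
def IsDerivedSeq {A : Type*} (x : ℕ → A) (u : List A) (R : ℕ)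
    (θ : ℕ → List A) (z : ℕ → ℕ) : Prop :=
  (∀ i < R, IsReturnWord x u (θ i)) ∧
  (∀ w, IsReturnWord x u w → ∃ i < R, θ i = w) ∧
  (∀ i < R, ∀ j < R, i < j →
      sInf {k | occursAt x (θ i) k} < sInf {k | occursAt x (θ j) k}) ∧
  (∀ k, z k < R) ∧
  (∀ n, IsPrefixSeq (morphApply θ (seqWord z 0 n)) x)

/-! Two occurrences of `u` at distance `p < |u|/L` make `t` periodic: the window they span has
period `p`; by linear recurrence every length-`p` factor of `t` reappears inside a copy of that
window, so all of them are rearrangements of one word, and two overlapping length-`p` factors with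
the same letters force `t (n + p) = t n`. Hence a return word to `u` has length at least `|u|/L`,
and a word of length at most `l` splits into at most `lL/|u|` of them. A return word also has
length at most `L|u|`, so all return words occur, followed by `u`, in a single window of length
`L(L+1)|u|` at positions at least `|u|/L` apart: there are at most `L²(L+1) + 1 ≤ 4L³` of them. -/

section Words

variable {A : Type*} {x : ℕ → A}

@[simp] lemma seqWord_length (x : ℕ → A) (i n : ℕ) : (seqWord x i n).length = n := by
  simp [seqWord]

lemma seqWord_add (x : ℕ → A) (i m n : ℕ) :
    seqWord x i (m + n) = seqWord x i m ++ seqWord x (i + m) n := by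
  simp [seqWord, List.range_add, add_assoc]

lemma seqWord_eq_seqWord_iff {i j n : ℕ} :
    seqWord x i n = seqWord x j n ↔ ∀ k < n, x (i + k) = x (j + k) := by
  simp [seqWord, List.ext_getElem_iff]

lemma occursAt_iff {u : List A} {i : ℕ} :
    occursAt x u i ↔ ∀ k (hk : k < u.length), x (i + k) = u[k] := by
  simp [occursAt, seqWord, List.ext_getElem_iff]

lemma occursAt_seqWord_iff {i n c : ℕ} :
    occursAt x (seqWord x i n) c ↔ seqWord x c n = seqWord x i n := by
  rw [occursAt, seqWord_length]

lemma occursAt_seqWord (x : ℕ → A) (i n : ℕ) : occursAt x (seqWord x i n) i :=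
  occursAt_seqWord_iff.2 rfl

lemma occursAt_append {v w : List A} {i : ℕ} :
    occursAt x (v ++ w) i ↔ occursAt x v i ∧ occursAt x w (i + v.length) := by
  unfold occursAt
  rw [List.length_append, seqWord_add]
  exact ⟨fun h => List.append_inj h (by simp), fun ⟨h₁, h₂⟩ => by rw [h₁, h₂]⟩

lemma occursAt_add_iff_of_occursAt {v w : List A} {m m' δ : ℕ}
    (hm : occursAt x v m) (hm' : occursAt x v m') (hδ : δ + w.length ≤ v.length) :
    occursAt x w (m + δ) ↔ occursAt x w (m' + δ) := by
  have hx : ∀ k < w.length, x (m + δ + k) = x (m' + δ + k) := fun k hk => by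
    rw [add_assoc, add_assoc, occursAt_iff.1 hm _ (by omega), occursAt_iff.1 hm' _ (by omega)]
  simp only [occursAt_iff]
  exact forall₂_congr fun k hk => by rw [hx k hk]

lemma seqWord_succ_perm_iff {j p : ℕ} :
    (seqWord x (j + 1) p).Perm (seqWord x j p) ↔ x (j + p) = x j := by
  have h : seqWord x j p ++ [x (j + p)] = x j :: seqWord x (j + 1) p := by
    have h₁ := seqWord_add x j p 1
    rw [add_comm p 1, seqWord_add] at h₁
    simpa [seqWord] using h₁.symm
  have hcons : (x (j + p) :: seqWord x j p).Perm (x j :: seqWord x j p) ↔ x (j + p) = x j :=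
    (List.perm_append_right_iff (l₁ := [_]) (l₂ := [_]) _).trans List.singleton_perm_singleton
  rw [← List.perm_cons (x j), ← h]
  exact ⟨fun hp => hcons.1 ((List.perm_append_singleton _ _).symm.trans hp),
    fun hp => (List.perm_append_singleton _ _).trans (hcons.2 hp)⟩

lemma seqWord_perm_of_periodicOn {c p n : ℕ} (h : ∀ k < n, x (c + k + p) = x (c + k)) :
    ∀ j ≤ n, (seqWord x (c + j) p).Perm (seqWord x c p)
  | 0, _ => List.Perm.refl _
  | j + 1, hj =>
    (seqWord_succ_perm_iff.2 (h j hj)).trans (seqWord_perm_of_periodicOn h j (by omega))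

end Words

section LinearRecurrence

variable {A : Type*} {t : ℕ → A} {L : ℕ}

lemma LinRec.pos (hlr : LinRec L t) : 0 < L := by
  obtain ⟨j, hj, hjL, -⟩ := hlr.2 [t 0] (List.cons_ne_nil _ _) ⟨0, rfl⟩ 0 rfl
  simp only [List.length_singleton, mul_one, zero_add] at hjL
  omega

lemma LinRec.exists_occursAt_near (hlr : LinRec L t) {v : List A} (hv : v ≠ []) {n c : ℕ}
    (hn : occursAt t v n) (hc : n ≤ c) :
    ∃ m, c ≤ m ∧ m < c + L * v.length ∧ occursAt t v m := by
  induction c, hc using Nat.le_induction with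
  | base =>
    have : 0 < L * v.length := Nat.mul_pos hlr.pos (List.length_pos_iff.2 hv)
    exact ⟨n, le_rfl, by omega, hn⟩
  | succ c _ ih =>
    obtain ⟨m, hcm, hm, hocc⟩ := ih
    by_cases hmc : m = c
    · subst hmc
      obtain ⟨j, hj, hjm, hocc'⟩ := hlr.2 v hv ⟨m, hocc⟩ m hocc
      exact ⟨j, hj, by omega, hocc'⟩
    · exact ⟨m, by omega, by omega, hocc⟩

theorem LinRec.ultPeriodic_of_occursAt (hlr : LinRec L t) {u : List A} {i p : ℕ} (hp : 0 < p)
    (hlt : L * p < u.length) (hi : occursAt t u i) (hip : occursAt t u (i + p)) :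
    UltPeriodic t := by
  set W := seqWord t i (u.length + p)
  have hW : W ≠ [] := by simp [W, ← List.length_pos_iff]; omega
  have hper : ∀ c, occursAt t W c → ∀ k < u.length, t (c + k + p) = t (c + k) := by
    intro c hc k hk
    rw [occursAt_seqWord_iff, seqWord_eq_seqWord_iff] at hc
    rw [add_assoc, hc _ (by omega), hc _ (by omega), add_comm k, ← add_assoc,
      occursAt_iff.1 hip k hk, occursAt_iff.1 hi k hk]
  have hperm : ∀ n, (seqWord t n p).Perm (seqWord t i p) := by
    intro n
    obtain ⟨c, hnc, -, hc⟩ :=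
      hlr.exists_occursAt_near hW (occursAt_seqWord t i _) (Nat.le_add_left i n)
    obtain ⟨m, hcm, hm, hocc⟩ := hlr.exists_occursAt_near (v := seqWord t n p) (c := c)
      (by simp [← List.length_pos_iff, hp]) (occursAt_seqWord t n p) (by omega)
    rw [occursAt_seqWord_iff] at hocc
    have hci : seqWord t c p = seqWord t i p := by
      rw [occursAt_seqWord_iff, seqWord_eq_seqWord_iff] at hc
      exact seqWord_eq_seqWord_iff.2 fun k hk => hc k (by omega)
    simp only [seqWord_length] at hm
    have := seqWord_perm_of_periodicOn (hper c hc) (m - c) (by omega)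
    rwa [Nat.add_sub_cancel' hcm, hocc, hci] at this
  exact ⟨p, hp, 0, fun n _ => seqWord_succ_perm_iff.1 ((hperm (n + 1)).trans (hperm n).symm)⟩

theorem LinRec.length_le_mul_sub (hlr : LinRec L t) (hnp : ¬ UltPeriodic t) {u : List A}
    {m m' : ℕ} (hm : occursAt t u m) (hm' : occursAt t u m') (hlt : m < m') :
    u.length ≤ L * (m' - m) := by
  by_contra! h
  exact hnp (hlr.ultPeriodic_of_occursAt (by omega) h hm (by rwa [Nat.add_sub_cancel' hlt.le]))

end LinearRecurrence

lemma Finset.card_mul_le_of_separated (S : Finset ℕ) {N M c L : ℕ}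
    (hS : ∀ x ∈ S, N ≤ x ∧ x ≤ M) (hsep : ∀ a ∈ S, ∀ b ∈ S, a < b → c ≤ L * (b - a)) :
    S.card * c ≤ L * (M - N) + c := by
  induction S using Finset.induction_on_max generalizing M with
  | empty => simp
  | insert a s hlt ih =>
    rw [Finset.card_insert_of_notMem fun ha => (hlt a ha).false, add_mul, one_mul]
    have ha := hS a (Finset.mem_insert_self a s)
    rcases s.eq_empty_or_nonempty with rfl | hs
    · simp
    set b := s.max' hs
    have hb : b ∈ s := s.max'_mem hs
    have hNb := (hS b (Finset.mem_insert_of_mem hb)).1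
    have hab : c ≤ L * (a - b) :=
      hsep b (Finset.mem_insert_of_mem hb) a (Finset.mem_insert_self a s) (hlt b hb)
    have ih' := ih (M := b)
      (fun x hx => ⟨(hS x (Finset.mem_insert_of_mem hx)).1, s.le_max' x hx⟩)
      (fun x hx y hy => hsep x (Finset.mem_insert_of_mem hx) y (Finset.mem_insert_of_mem hy))
    have hsplit : L * (b - N) + L * (a - b) ≤ L * (M - N) := by
      rw [← mul_add]
      exact Nat.mul_le_mul_left L (by have := hlt b hb; omega)
    omega

section ReturnWords

variable {A : Type*} {t : ℕ → A} {L : ℕ} {u w w' : List A} {m m' : ℕ}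

structure IsReturnWordAt (t : ℕ → A) (u : List A) (m : ℕ) (w : List A) : Prop where
  ne_nil : w ≠ []
  occursAt_start : occursAt t u m
  occursAt_concat : occursAt t (w ++ u) m
  not_occursAt_between : ∀ δ, 0 < δ → δ < w.length → ¬ occursAt t u (m + δ)

lemma IsReturnWord.exists_isReturnWordAt (h : IsReturnWord t u w) :
    ∃ m, IsReturnWordAt t u m w := by
  obtain ⟨i, j, hij, hi, hj, hbetween, rfl⟩ := h
  refine ⟨i, ⟨by simp [← List.length_pos_iff]; omega, hi,
    occursAt_append.2 ⟨occursAt_seqWord t i _, by simpa [Nat.add_sub_cancel' hij.le]⟩,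
    fun δ hδ hδ' => hbetween _ (by omega) (by simp at hδ'; omega)⟩⟩

lemma IsReturnWordAt.eq (h : IsReturnWordAt t u m w) (h' : IsReturnWordAt t u m w') :
    w = w' := by
  have hw := occursAt_append.1 h.occursAt_concat
  have hw' := occursAt_append.1 h'.occursAt_concat
  have hlen : w.length = w'.length := by
    by_contra hne
    rcases Nat.lt_or_gt_of_ne hne with hlt | hlt
    · exact h'.not_occursAt_between _ (List.length_pos_iff.2 h.ne_nil) hlt hw.2
    · exact h.not_occursAt_between _ (List.length_pos_iff.2 h'.ne_nil) hlt hw'.2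
  rw [← hw.1, ← hw'.1, hlen]

lemma IsReturnWordAt.of_occursAt (h : IsReturnWordAt t u m w) (h' : occursAt t (w ++ u) m') :
    IsReturnWordAt t u m' w := by
  obtain ⟨hw, hu, hwu, hbetween⟩ := h
  refine ⟨hw, ?_, h', fun δ hδ hδ' hocc => hbetween δ hδ hδ' ?_⟩
  · simpa using (occursAt_add_iff_of_occursAt (δ := 0) hwu h' (by simp)).1 (by simpa using hu)
  · exact (occursAt_add_iff_of_occursAt hwu h' (by simp; omega)).2 hocc

lemma IsReturnWord.length_le (hlr : LinRec L t) (hu : u ≠ []) (h : IsReturnWord t u w) :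
    w.length ≤ L * u.length := by
  obtain ⟨i, j, hij, hi, hj, hbetween, rfl⟩ := h
  obtain ⟨j', hij', hj'L, hj'⟩ := hlr.2 u hu ⟨i, hi⟩ i hi
  have : j ≤ j' := not_lt.1 fun hlt => hbetween j' hij' hlt hj'
  simp only [seqWord_length]
  omega

lemma IsReturnWord.le_mul_length (hlr : LinRec L t) (hnp : ¬ UltPeriodic t)
    (h : IsReturnWord t u w) : u.length ≤ L * w.length := by
  obtain ⟨i, j, hij, hi, hj, -, rfl⟩ := h
  simpa using hlr.length_le_mul_sub hnp hi hj hij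

lemma length_mul_le_of_forall_isReturnWord (hlr : LinRec L t) (hnp : ¬ UltPeriodic t)
    {ps : List (List A)} (h : ∀ p ∈ ps, IsReturnWord t u p) :
    ps.length * u.length ≤ L * ps.flatten.length := by
  induction ps with
  | nil => simp
  | cons p ps ih =>
    have hp := (h p List.mem_cons_self).le_mul_length hlr hnp
    have hps := ih fun q hq => h q (List.mem_cons_of_mem p hq)
    simp only [List.length_cons, List.flatten_cons, List.length_append]
    rw [add_mul, one_mul, mul_add]
    omega

theorem card_le_of_forall_isReturnWord (hlr : LinRec L t) (hnp : ¬ UltPeriodic t) (hu : u ≠ [])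
    (R : Finset (List A)) (hR : ∀ w ∈ R, IsReturnWord t u w) :
    R.card ≤ L ^ 2 * (L + 1) + 1 := by
  choose! m₀ hm₀ using fun w hw => (hR w hw).exists_isReturnWordAt
  obtain ⟨N, hN⟩ : ∃ N, ∀ w ∈ R, m₀ w ≤ N := ⟨R.sup m₀, fun w hw => Finset.le_sup hw⟩
  have hnear : ∀ w ∈ R, ∃ m, N ≤ m ∧ m ≤ N + L * ((L + 1) * u.length) ∧
      IsReturnWordAt t u m w := by
    intro w hw
    have hlen : (w ++ u).length ≤ (L + 1) * u.length := by
      have := (hR w hw).length_le hlr hu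
      simp only [List.length_append]
      linarith
    obtain ⟨m, hNm, hm, hocc⟩ := hlr.exists_occursAt_near (List.append_ne_nil_of_right_ne_nil w hu)
      (hm₀ w hw).occursAt_concat (hN w hw)
    have := Nat.mul_le_mul_left L hlen
    exact ⟨m, hNm, by omega, (hm₀ w hw).of_occursAt hocc⟩
  choose! m hm using hnear
  have hinj : Set.InjOn m R := fun w hw w' hw' heq => (hm w hw).2.2.eq (heq ▸ (hm w' hw').2.2)
  have hsep : ∀ a ∈ R.image m, ∀ b ∈ R.image m, a < b → u.length ≤ L * (b - a) := by
    simp only [Finset.mem_image]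
    rintro _ ⟨w, hw, rfl⟩ _ ⟨w', hw', rfl⟩ hlt
    exact hlr.length_le_mul_sub hnp (hm w hw).2.2.occursAt_start (hm w' hw').2.2.occursAt_start hlt
  have hcard := (R.image m).card_mul_le_of_separated (N := N) (M := N + L * ((L + 1) * u.length))
    (by simp only [Finset.mem_image]; rintro _ ⟨w, hw, rfl⟩; exact ⟨(hm w hw).1, (hm w hw).2.1⟩)
    hsep
  rw [Finset.card_image_of_injOn hinj, Nat.add_sub_cancel_left] at hcard
  refine Nat.le_of_mul_le_mul_right ?_ (List.length_pos_iff.2 hu)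
  calc R.card * u.length ≤ L * (L * ((L + 1) * u.length)) + u.length := hcard
    _ = (L ^ 2 * (L + 1) + 1) * u.length := by ring

theorem finite_setOf_isReturnWord (hlr : LinRec L t) (hnp : ¬ UltPeriodic t) (hu : u ≠ []) :
    {w | IsReturnWord t u w}.Finite := by
  by_contra hinf
  obtain ⟨R, hR, hcard⟩ := Set.Infinite.exists_subset_card_eq hinf (L ^ 2 * (L + 1) + 2)
  have := card_le_of_forall_isReturnWord hlr hnp hu R hR
  omega

end ReturnWords

theorem Set.ncard_le_of_forall_eq_flatten {α : Type*} {S : Set (List α)}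
    (R : Finset (List α)) (K : ℕ)
    (h : ∀ w ∈ S, ∃ ps : List (List α), ps.length ≤ K ∧ (∀ p ∈ ps, p ∈ R) ∧ ps.flatten = w) :
    S.ncard ≤ (R.card + 1) ^ K := by
  choose! ps hlen hmem hflat using h
  let code : List α → Fin K → Option (List α) := fun w i => (ps w)[(i : ℕ)]?
  have hcode : ∀ w ∈ S, code w ∈ (Fintype.piFinset fun _ : Fin K => R.insertNone : Set _) := by
    intro w hw
    simp only [Finset.mem_coe, Fintype.mem_piFinset]
    intro i
    show (ps w)[(i : ℕ)]? ∈ _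
    cases hi : (ps w)[(i : ℕ)]? with
    | none => exact Finset.none_mem_insertNone
    | some p => exact Finset.some_mem_insertNone.2 (hmem w hw p (List.mem_of_getElem? hi))
  have hinj : Set.InjOn code S := by
    intro w hw w' hw' heq
    rw [← hflat w hw, ← hflat w' hw']
    congr 1
    refine List.ext_getElem? fun n => ?_
    by_cases hn : n < K
    · exact congrFun heq ⟨n, hn⟩
    · have := hlen w hw
      have := hlen w' hw'
      rw [List.getElem?_eq_none (by omega), List.getElem?_eq_none (by omega)]
  calc S.ncard ≤ (↑(Fintype.piFinset fun _ : Fin K => R.insertNone) : Set _).ncard :=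
        Set.ncard_le_ncard_of_injOn code hcode hinj (Finset.finite_toSet _)
    _ = (R.card + 1) ^ K := by
      rw [Set.ncard_coe_finset, Fintype.card_piFinset]
      simp

theorem concat_returnWords_count_bound_general {A : Type*} (t : ℕ → A)
    (L : ℕ) (hlr : LinRec L t) (hnp : ¬ UltPeriodic t)
    (u : List A) (hu : u ≠ []) (l : ℕ) :
    ({w : List A | IsFactor t w ∧ w.length ≤ l ∧
        ∃ parts : List (List A),
          (∀ p ∈ parts, IsReturnWord t u p) ∧ parts.flatten = w}.ncard : ℝ) ≤
      (1 + 4 * (L : ℝ) ^ 3) ^ (((l : ℝ) * L) / (u.length : ℝ)) := by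
  set K := L * l / u.length
  have hfin := finite_setOf_isReturnWord hlr hnp hu
  set R := hfin.toFinset
  have hR : R.card + 1 ≤ 1 + 4 * L ^ 3 := by
    have := card_le_of_forall_isReturnWord hlr hnp hu R fun w => hfin.mem_toFinset.1
    have := hlr.pos
    nlinarith
  have hK : (K : ℝ) ≤ l * L / u.length := by
    calc (K : ℝ) ≤ ((L * l : ℕ) : ℝ) / u.length := Nat.cast_div_le
      _ = l * L / u.length := by push_cast; ring
  calc _ ≤ ((R.card + 1 : ℕ) : ℝ) ^ K := by
        rw [← Nat.cast_pow, Nat.cast_le]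
        refine Set.ncard_le_of_forall_eq_flatten R K ?_
        rintro w ⟨-, hwl, ps, hps, rfl⟩
        refine ⟨ps, (Nat.le_div_iff_mul_le (List.length_pos_iff.2 hu)).2 ?_,
          fun p hp => hfin.mem_toFinset.2 (hps p hp), rfl⟩
        exact (length_mul_le_of_forall_isReturnWord hlr hnp hps).trans
          (Nat.mul_le_mul_left L hwl)
    _ ≤ (1 + 4 * (L : ℝ) ^ 3) ^ K := pow_le_pow_left₀ (by positivity) (by exact_mod_cast hR) K
    _ = (1 + 4 * (L : ℝ) ^ 3) ^ (K : ℝ) := (Real.rpow_natCast _ _).symm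
    _ ≤ _ := Real.rpow_le_rpow_of_exponent_le (le_add_of_nonneg_right (by positivity)) hK

/-- Lemma (Durand 2011): let `t` be a non-periodic linearly recurrent sequence with
constant `L`, `u` a (non-empty) factor of `t` and `l ∈ ℕ`. Then the number of factors of
`t` of length at most `l` that are concatenations of return words to `u` is at most
`(1 + 4L³)^(lL/|u|)`. -/
theorem concat_returnWords_count_bound {A : Type*} [Fintype A] (t : ℕ → A)
    (L : ℕ) (hlr : LinRec L t) (hnp : ¬ UltPeriodic t)
    (u : List A) (hu : u ≠ []) (huf : IsFactor t u) (l : ℕ) :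
    ({w : List A | IsFactor t w ∧ w.length ≤ l ∧
        ∃ parts : List (List A),
          (∀ p ∈ parts, IsReturnWord t u p) ∧ parts.flatten = w}.ncard : ℝ) ≤
      (1 + 4 * (L : ℝ) ^ 3) ^ (((l : ℝ) * L) / (u.length : ℝ)) :=
  concat_returnWords_count_bound_general t L hlr hnp u hu l
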